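/- arXiv:2006.07696 — 4 statements merged into one kernel-verified Lean document; each statement's English description precedes it below -/
import Mathlib

section
/- Let A : B₁ → B₂ be a bounded linear operator between Banach spaces. If the quotient vector space B₂ / range(A) is finite-dimensional, then the range of A is closed. -/
/-!
Choose an algebraic complement `q` of `range A`; it is finite-dimensional, hence closed.
The map `(x, m) ↦ A x + m` from `B₁ × q` onto `B₂` is open by the open mapping theorem,
hence a quotient map, and the preimage of `range A` under it is the closed subspace `B₁ × {0}`.
-/

open Function

namespace ContinuousLinearMap

theorem preimage_range_coprod_subtypeL_of_disjoint {R M N : Type*} [Ring R]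
    [TopologicalSpace M] [AddCommGroup M] [Module R M]
    [TopologicalSpace N] [AddCommGroup N] [Module R N] [ContinuousAdd N]
    (f : M →L[R] N) {G : Submodule R N} (h : Disjoint f.range G) :
    f.coprod G.subtypeL ⁻¹' f.range = Prod.snd ⁻¹' {0} := by
  ext ⟨x, m⟩
  suffices f x + m ∈ f.range ↔ m = 0 by simpa using this
  refine ⟨fun hm => ?_, fun hm => by simp [hm]⟩
  have hmf : (m : N) ∈ f.range := by
    simpa using f.range.sub_mem hm (LinearMap.mem_range_self (f : M →ₗ[R] N) x)
  exact Subtype.ext (Submodule.disjoint_def.1 h m hmf m.2)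

theorem isClosed_range_of_isCompl {𝕜 E F : Type*} [NontriviallyNormedField 𝕜]
    [NormedAddCommGroup E] [NormedSpace 𝕜 E] [CompleteSpace E]
    [NormedAddCommGroup F] [NormedSpace 𝕜 F] [CompleteSpace F]
    (f : E →L[𝕜] F) (G : Submodule 𝕜 F) (h : IsCompl f.range G)
    (hG : IsClosed (G : Set F)) :
    IsClosed (f.range : Set F) := by
  have : CompleteSpace G := hG.completeSpace_coe
  have hsurj : Surjective (f.coprod G.subtypeL) := LinearMap.range_eq_top.1 <| by
    simpa [LinearMap.range_coprod] using h.sup_eq_top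
  rw [← ((f.coprod G.subtypeL).isQuotientMap hsurj).isClosed_preimage,
    f.preimage_range_coprod_subtypeL_of_disjoint h.disjoint]
  exact isClosed_singleton.preimage continuous_snd

end ContinuousLinearMap

/-- If, for a bounded linear operator between Banach spaces, the algebraic quotient
of the codomain by the range is finite-dimensional, then the range is closed. -/
theorem stmt_1
    {B₁ B₂ : Type*} [NormedAddCommGroup B₁] [NormedSpace ℝ B₁] [CompleteSpace B₁]
    [NormedAddCommGroup B₂] [NormedSpace ℝ B₂] [CompleteSpace B₂]
    (A : B₁ →L[ℝ] B₂)
    (h : FiniteDimensional ℝ (B₂ ⧸ LinearMap.range (A : B₁ →ₗ[ℝ] B₂))) :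
    IsClosed (Set.range A) := by
  obtain ⟨q, hq⟩ := (LinearMap.range (A : B₁ →ₗ[ℝ] B₂)).exists_isCompl
  have : FiniteDimensional ℝ q := (Submodule.quotientEquivOfIsCompl _ q hq).finiteDimensional
  simpa only [LinearMap.coe_range, ContinuousLinearMap.coe_coe] using
    A.isClosed_range_of_isCompl q hq q.closed_of_finiteDimensional
end

section
/- Let E be a Banach space such that E ⊕ E is isomorphic (as Banach spaces) to E. Then there is no unital linear action of the algebra L(E) of bounded operators on E on any nonzero finite-dimensional vector space; i.e., any algebra homomorphism from L(E) to L(V) with V finite-dimensional and nonzero fails to send the identity I_E to I_V. -/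
/-!
If `E × E ≃ E`, the identity of `L(E)` splits as `1 = a₁ b₁ + a₂ b₂` with `b₁ a₁ = b₂ a₂ = 1`.
Any additive functional `τ` with `τ (x y) = τ (y x)` then satisfies
`τ 1 = τ (b₁ a₁) + τ (b₂ a₂) = 2 τ 1`, so `τ 1 = 0`. Composing a multiplicative representation
`ρ` with the trace of `End V` gives such a functional, and if `ρ 1 = 1` its value at `1` is
`dim V ≠ 0`.
-/

theorem AddMonoidHom.map_one_eq_zero_of_map_mul_comm {R M : Type*} [Semiring R]
    [AddCancelMonoid M] (τ : R →+ M) (hτ : ∀ x y, τ (x * y) = τ (y * x))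
    {a₁ b₁ a₂ b₂ : R} (h₁ : b₁ * a₁ = 1) (h₂ : b₂ * a₂ = 1) (h : a₁ * b₁ + a₂ * b₂ = 1) :
    τ 1 = 0 := by
  have : τ 1 + τ 1 = τ 1 := by
    conv_rhs => rw [← h]
    rw [map_add, hτ a₁, hτ a₂, h₁, h₂]
  simpa using this

theorem ContinuousLinearEquiv.exists_split_one_of_prod_self {𝕜 E : Type*} [Semiring 𝕜]
    [TopologicalSpace E] [AddCommMonoid E] [ContinuousAdd E] [Module 𝕜 E]
    (φ : (E × E) ≃L[𝕜] E) :
    ∃ a₁ b₁ a₂ b₂ : E →L[𝕜] E, b₁ * a₁ = 1 ∧ b₂ * a₂ = 1 ∧ a₁ * b₁ + a₂ * b₂ = 1 := by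
  refine ⟨(φ : (E × E) →L[𝕜] E).comp (.inl 𝕜 E E),
    (ContinuousLinearMap.fst 𝕜 E E).comp φ.symm.toContinuousLinearMap,
    (φ : (E × E) →L[𝕜] E).comp (.inr 𝕜 E E),
    (ContinuousLinearMap.snd 𝕜 E E).comp φ.symm.toContinuousLinearMap, ?_, ?_, ?_⟩ <;>
  ext x <;> simp [← map_add]

theorem LinearMap.trace_map_mul_comm {K R V : Type*} [CommSemiring K] [Semiring R] [Module K R]
    [AddCommMonoid V] [Module K V] (ρ : R →ₗ[K] Module.End K V)
    (hρ : ∀ x y, ρ (x * y) = ρ x * ρ y) (x y : R) :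
    LinearMap.trace K V (ρ (x * y)) = LinearMap.trace K V (ρ (y * x)) := by
  rw [hρ, hρ, LinearMap.trace_mul_comm]

theorem stmt_10_general
    {E : Type*} [NormedAddCommGroup E] [NormedSpace ℝ E]
    (hiso : Nonempty ((E × E) ≃L[ℝ] E))
    (V : Type*) [AddCommGroup V] [Module ℝ V] [FiniteDimensional ℝ V] [Nontrivial V]
    (ρ : (E →L[ℝ] E) →ₗ[ℝ] Module.End ℝ V)
    (hmul : ∀ A B : E →L[ℝ] E, ρ (A * B) = ρ A * ρ B) :
    ρ 1 ≠ 1 := by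
  intro hρ
  obtain ⟨a₁, b₁, a₂, b₂, h₁, h₂, h⟩ := hiso.some.exists_split_one_of_prod_self
  have htr : LinearMap.trace ℝ V (ρ 1) = 0 :=
    AddMonoidHom.map_one_eq_zero_of_map_mul_comm (LinearMap.trace ℝ V ∘ₗ ρ).toAddMonoidHom
      (LinearMap.trace_map_mul_comm ρ hmul) h₁ h₂ h
  rw [hρ, LinearMap.trace_one] at htr
  exact Module.finrank_pos.ne' (by exact_mod_cast htr)

/-- If a Banach space `E` satisfies `E ⊕ E ≅ E` (Banach space isomorphism), then there is
no unital multiplicative linear action of the algebra `L(E)` of bounded operators on any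
nonzero finite-dimensional vector space `V`: every linear multiplicative map
`L(E) → End(V)` fails to send the identity to the identity. -/
theorem stmt_10
    {E : Type*} [NormedAddCommGroup E] [NormedSpace ℝ E] [CompleteSpace E]
    (hiso : Nonempty ((E × E) ≃L[ℝ] E))
    (V : Type*) [AddCommGroup V] [Module ℝ V] [FiniteDimensional ℝ V] [Nontrivial V]
    (ρ : (E →L[ℝ] E) →ₗ[ℝ] Module.End ℝ V)
    (hmul : ∀ A B : E →L[ℝ] E, ρ (A * B) = ρ A * ρ B) :
    ρ 1 ≠ 1 :=
  stmt_10_general hiso V ρ hmul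
end

section
/- Let E be a Banach space with complementary closed subspaces E₁, E₂ (so E = E₁ ⊕ E₂ with bounded projections P₁, P₂, P₁ + P₂ = I), each of E₁, E₂ isomorphic to E. Let ρ : L(E) → End(V) be a unital algebra homomorphism into the endomorphisms of a finite-dimensional vector space V. Then for any bounded isomorphism τ : E → E₁ (viewed as τ : E → E composed with inclusion), ρ(τ⁻¹P₁)∘ρ(τ) = id_V implies ρ(τ)∘ρ(τ⁻¹P₁) = id_V, and consequently ρ(P₂) = 0, ρ(P₁) = 0, and id_V = ρ(P₁) + ρ(P₂) = 0, a contradiction unless V = 0. -/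
/-!
If `b * a = 1` and `a * b = p`, then `p` is a projection whose range is a copy of the whole
space. Under a unital multiplicative map into a Dedekind-finite algebra such as `End(V)` with
`dim V < ∞`, the one-sided inverse becomes two-sided, so `p` goes to `1`. Applied to both `P₁`
and `P₂` this gives `1 = ρ(P₁ + P₂) = 1 + 1`, i.e. `1 = 0` in `End(V)`, so `V = 0`.
-/

namespace MonoidHom

variable {M N : Type*} [Monoid M] [Monoid N] [IsDedekindFiniteMonoid N] (f : M →* N)

theorem map_mul_map_eq_one_of_mul_eq_one {a b : M} (h : b * a = 1) : f a * f b = 1 :=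
  mul_eq_one_comm.mp (by rw [← map_mul, h, map_one])

theorem map_eq_one_of_mul_eq_one_of_mul_eq {a b p : M} (hba : b * a = 1) (hab : a * b = p) :
    f p = 1 := by
  rw [← hab, map_mul, f.map_mul_map_eq_one_of_mul_eq_one hba]

end MonoidHom

theorem stmt_11_general
    {E : Type*} [NormedAddCommGroup E] [NormedSpace ℝ E]
    (P₁ P₂ τ τ₁ τ' τ'₁ : E →L[ℝ] E)
    (hsum : P₁ + P₂ = 1)
    (hleft : τ₁ * τ = 1) (hright : τ * τ₁ = P₁)
    (hleft' : τ'₁ * τ' = 1) (hright' : τ' * τ'₁ = P₂)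
    (V : Type*) [AddCommGroup V] [Module ℝ V] [FiniteDimensional ℝ V]
    (ρ : (E →L[ℝ] E) →ₗ[ℝ] Module.End ℝ V)
    (hmul : ∀ A B : E →L[ℝ] E, ρ (A * B) = ρ A * ρ B)
    (hone : ρ 1 = 1) :
    (ρ τ * ρ τ₁ = 1) ∧ ρ P₁ = 0 ∧ ρ P₂ = 0 ∧ Subsingleton V := by
  let f : (E →L[ℝ] E) →* Module.End ℝ V := ⟨⟨ρ, hone⟩, hmul⟩
  have hP₁ : ρ P₁ = 1 := f.map_eq_one_of_mul_eq_one_of_mul_eq hleft hright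
  have hP₂ : ρ P₂ = 1 := f.map_eq_one_of_mul_eq_one_of_mul_eq hleft' hright'
  have hEnd : Subsingleton (Module.End ℝ V) := by
    have h : (1 : Module.End ℝ V) + 1 = 1 :=
      calc (1 : Module.End ℝ V) + 1 = ρ (P₁ + P₂) := by rw [map_add, hP₁, hP₂]
        _ = 1 := by rw [hsum, hone]
    exact subsingleton_of_zero_eq_one (add_eq_left.mp h).symm
  exact ⟨f.map_mul_map_eq_one_of_mul_eq_one hleft, Subsingleton.elim _ _, Subsingleton.elim _ _,
    Module.subsingleton (Module.End ℝ V) V⟩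

/-- Let `P₁, P₂` be bounded projections on a Banach space `E` with `P₁ + P₂ = I`, whose
ranges `E₁, E₂` are each isomorphic to `E`: there are operators `τ, τ' : E → E`
(isomorphisms onto `E₁`, `E₂`) with left inverses `τ₁ = τ⁻¹P₁`, `τ'₁ = τ'⁻¹P₂`, so that
`τ₁τ = 1`, `ττ₁ = P₁`, `τ'₁τ' = 1`, `τ'τ'₁ = P₂`. If `ρ : L(E) → End(V)` is a unital
multiplicative linear map into the endomorphisms of a finite-dimensional vector space
`V`, then (since in `End(V)` a left inverse is a right inverse) `ρ(τ)ρ(τ₁) = 1`, hence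
`ρ(P₁) = 0` and `ρ(P₂) = 0`, so `id_V = ρ(P₁) + ρ(P₂) = 0` and `V = 0`. -/
theorem stmt_11
    {E : Type*} [NormedAddCommGroup E] [NormedSpace ℝ E] [CompleteSpace E]
    (P₁ P₂ τ τ₁ τ' τ'₁ : E →L[ℝ] E)
    (hsum : P₁ + P₂ = 1)
    (hproj₁ : P₁ * P₁ = P₁) (hproj₂ : P₂ * P₂ = P₂)
    (hleft : τ₁ * τ = 1) (hright : τ * τ₁ = P₁)
    (hleft' : τ'₁ * τ' = 1) (hright' : τ' * τ'₁ = P₂)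
    (V : Type*) [AddCommGroup V] [Module ℝ V] [FiniteDimensional ℝ V]
    (ρ : (E →L[ℝ] E) →ₗ[ℝ] Module.End ℝ V)
    (hmul : ∀ A B : E →L[ℝ] E, ρ (A * B) = ρ A * ρ B)
    (hone : ρ 1 = 1) :
    (ρ τ * ρ τ₁ = 1) ∧ ρ P₁ = 0 ∧ ρ P₂ = 0 ∧ Subsingleton V :=
  stmt_11_general P₁ P₂ τ τ₁ τ' τ'₁ hsum hleft hright hleft' hright' V ρ hmul hone
end

section
/- For finite-dimensional Hilbert spaces, Enflo's doubling construction preserves the quasi-additivity estimate: let h : ℓ²(m) → ℓ²(m) be homogeneous and satisfy ‖Σᵢ h(xᵢ)‖ ≤ Σᵢ ‖xᵢ‖ for every finite collection x₁,…,x_r with Σᵢ xᵢ = 0. Define Δh : ℓ²(m) × ℓ²(m) → ℓ²(m) × ℓ²(m) × ℓ²(m) ≅ ℓ²(2m)→ℓ²(3m)-type map by Δh(x,y) := (h(x), h(y), x‖y‖/√(‖x‖²+‖y‖²)) (with the last coordinate 0 when x = y = 0). Then Δh also satisfies ‖Σᵢ Δh(zᵢ)‖ ≤ Σᵢ ‖zᵢ‖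 for every finite collection z₁,…,z_r in ℓ²(m) × ℓ²(m) with Σᵢ zᵢ = 0. -/
/-!
Write `z i = (x i, y i)`, `a i = ‖x i‖`, `b i = ‖y i‖` and `s i = √(a i ² + b i ²)`. The first two
components of `Σ Δh(z i)` are bounded by `A = Σ a i` and `B = Σ b i` by hypothesis. For the third,
`Σ x i = 0` lets us subtract any multiple `t • Σ x i`, so with `c i = b i / s i` its norm is at most
`Σ |c i - t| a i`. Choosing `t = B / S`, the `s`-weighted mean of `c` with `S = Σ s i`, two
Cauchy–Schwarz inequalities and the identity `(c i)² + (a i / s i)² = 1` give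
`(Σ |c i - t| a i)² + A² + B² ≤ S²`.
-/

open Finset

lemma Finset.sq_sum_mul_le_sum_mul_sum_mul_sq {ι : Type*} (s : Finset ι) {w : ι → ℝ}
    (hw : ∀ i ∈ s, 0 ≤ w i) (f : ι → ℝ) :
    (∑ i ∈ s, w i * f i) ^ 2 ≤ (∑ i ∈ s, w i) * ∑ i ∈ s, w i * f i ^ 2 :=
  sum_sq_le_sum_mul_sum_of_sq_le_mul s hw (fun i hi => mul_nonneg (hw i hi) (sq_nonneg _))
    fun i _ => (by ring : (w i * f i) ^ 2 = w i * (w i * f i ^ 2)).le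

lemma sq_sum_mul_add_sq_sum_mul_add_sq_sum_mul_abs_sub_mean_le {ι : Type*} (s : Finset ι)
    {w c d : ι → ℝ} (hw : ∀ i ∈ s, 0 ≤ w i) (hcd : ∀ i ∈ s, c i ^ 2 + d i ^ 2 ≤ 1) :
    (∑ i ∈ s, w i * d i) ^ 2 + (∑ i ∈ s, w i * c i) ^ 2
      + (∑ i ∈ s, w i * (|c i - (∑ j ∈ s, w j * c j) / ∑ j ∈ s, w j| * d i)) ^ 2
      ≤ (∑ i ∈ s, w i) ^ 2 := by
  set S := ∑ j ∈ s, w j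
  set B := ∑ j ∈ s, w j * c j
  set t := B / S
  have hS : 0 ≤ S := sum_nonneg hw
  have ht : t * S = B := div_mul_cancel_of_imp fun hS0 => sum_eq_zero fun i hi => by
    rw [(sum_eq_zero_iff_of_nonneg hw).1 hS0 i hi, zero_mul]
  have hdev : (∑ i ∈ s, w i * (|c i - t| * d i)) ^ 2 ≤ S * ∑ i ∈ s, w i * (c i - t) ^ 2 := by
    refine (sq_sum_mul_le_sum_mul_sum_mul_sq s hw _).trans (mul_le_mul_of_nonneg_left ?_ hS)
    refine sum_le_sum fun i hi => mul_le_mul_of_nonneg_left ?_ (hw i hi)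
    rw [mul_pow, sq_abs]
    nlinarith [hcd i hi, sq_nonneg (c i), sq_nonneg (c i - t)]
  have hvar : S * ∑ i ∈ s, w i * (c i - t) ^ 2 = S * ∑ i ∈ s, w i * c i ^ 2 - B ^ 2 := by
    have hexp : ∑ i ∈ s, w i * (c i - t) ^ 2
        = ∑ i ∈ s, w i * c i ^ 2 - 2 * t * B + t ^ 2 * S := by
      simp only [B, S, mul_sum, ← sum_sub_distrib, ← sum_add_distrib]
      exact sum_congr rfl fun i _ => by ring
    rw [hexp, ← ht]
    ring
  have hA : (∑ i ∈ s, w i * d i) ^ 2 ≤ S * ∑ i ∈ s, w i * d i ^ 2 :=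
    sq_sum_mul_le_sum_mul_sum_mul_sq s hw d
  have hunit : ∑ i ∈ s, w i * c i ^ 2 + ∑ i ∈ s, w i * d i ^ 2 ≤ S := by
    rw [← sum_add_distrib]
    exact sum_le_sum fun i hi => by nlinarith [hw i hi, hcd i hi]
  nlinarith [mul_le_mul_of_nonneg_left hunit hS]

lemma norm_sum_smul_le_sum_abs_sub_mul_norm {ι E : Type*} [SeminormedAddCommGroup E]
    [NormedSpace ℝ E] (s : Finset ι) (c : ι → ℝ) {x : ι → E} (hx : ∑ i ∈ s, x i = 0) (t : ℝ) :
    ‖∑ i ∈ s, c i • x i‖ ≤ ∑ i ∈ s, |c i - t| * ‖x i‖ := calc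
  ‖∑ i ∈ s, c i • x i‖ = ‖∑ i ∈ s, (c i - t) • x i‖ := by
    simp only [sub_smul, sum_sub_distrib, ← smul_sum, hx, smul_zero, sub_zero]
  _ ≤ ∑ i ∈ s, ‖(c i - t) • x i‖ := norm_sum_le _ _
  _ = ∑ i ∈ s, |c i - t| * ‖x i‖ := by simp only [norm_smul, Real.norm_eq_abs]

theorem stmt_12_general {m : ℕ}
    (h : EuclideanSpace ℝ (Fin m) → EuclideanSpace ℝ (Fin m))
    (hquasi : ∀ (r : ℕ) (x : Fin r → EuclideanSpace ℝ (Fin m)),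
      (∑ i, x i = 0) → ‖∑ i, h (x i)‖ ≤ ∑ i, ‖x i‖) :
    ∀ (r : ℕ) (z : Fin r → EuclideanSpace ℝ (Fin m) × EuclideanSpace ℝ (Fin m)),
      (∑ i, z i = 0) →
      Real.sqrt (‖∑ i, h (z i).1‖ ^ 2 + ‖∑ i, h (z i).2‖ ^ 2 +
          ‖∑ i, (‖(z i).2‖ / Real.sqrt (‖(z i).1‖ ^ 2 + ‖(z i).2‖ ^ 2)) • (z i).1‖ ^ 2) ≤
        ∑ i, Real.sqrt (‖(z i).1‖ ^ 2 + ‖(z i).2‖ ^ 2) := by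
  intro r z hz
  set s : Fin r → ℝ := fun i => Real.sqrt (‖(z i).1‖ ^ 2 + ‖(z i).2‖ ^ 2)
  set c : Fin r → ℝ := fun i => ‖(z i).2‖ / s i
  set d : Fin r → ℝ := fun i => ‖(z i).1‖ / s i
  have hx : ∑ i, (z i).1 = 0 := by rw [← Prod.fst_sum, hz, Prod.fst_zero]
  have hy : ∑ i, (z i).2 = 0 := by rw [← Prod.snd_sum, hz, Prod.snd_zero]
  have hs : ∀ i, 0 ≤ s i := fun i => Real.sqrt_nonneg _
  have hys : ∀ i, ‖(z i).2‖ ≤ s i := fun i =>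
    Real.le_sqrt_of_sq_le (le_add_of_nonneg_left (sq_nonneg _))
  have hxs : ∀ i, ‖(z i).1‖ ≤ s i := fun i =>
    Real.le_sqrt_of_sq_le (le_add_of_nonneg_right (sq_nonneg _))
  have hsc : ∀ i, s i * c i = ‖(z i).2‖ := fun i => mul_div_cancel_of_imp' fun h0 =>
    ((hys i).trans h0.le).antisymm (norm_nonneg _)
  have hsd : ∀ i, s i * d i = ‖(z i).1‖ := fun i => mul_div_cancel_of_imp' fun h0 =>
    ((hxs i).trans h0.le).antisymm (norm_nonneg _)
  have hcd : ∀ i ∈ univ, c i ^ 2 + d i ^ 2 ≤ 1 := fun i _ => by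
    rw [div_pow, div_pow, ← add_div, Real.sq_sqrt (by positivity), add_comm]
    exact div_self_le_one _
  have hsq := sq_sum_mul_add_sq_sum_mul_add_sq_sum_mul_abs_sub_mean_le univ (fun i _ => hs i) hcd
  simp only [hsc, hsd] at hsq
  have hthird := norm_sum_smul_le_sum_abs_sub_mul_norm univ c hx
    ((∑ j, ‖(z j).2‖) / ∑ j, s j)
  simp only [← hsd, mul_left_comm |_| (s _)] at hthird
  refine Real.sqrt_le_iff.2 ⟨sum_nonneg fun i _ => hs i, hsq.trans' ?_⟩
  gcongr
  · exact hquasi r _ hx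
  · exact hquasi r _ hy

/-- Enflo's doubling construction preserves the quasi-additivity estimate with constant 1.
If `h : ℓ²(m) → ℓ²(m)` is homogeneous and satisfies `‖Σ h(xᵢ)‖ ≤ Σ ‖xᵢ‖` for all finite
collections with `Σ xᵢ = 0`, then
`Δh(x,y) := (h x, h y, (‖y‖/√(‖x‖²+‖y‖²)) • x)` satisfies the same estimate, where the
domain `ℓ²(m) × ℓ²(m)` carries the ℓ²-product norm `√(‖x‖²+‖y‖²)` and the codomain
triple carries the ℓ² norm `√(‖a‖²+‖b‖²+‖c‖²)` (spelled out explicitly below). -/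
theorem stmt_12 {m : ℕ}
    (h : EuclideanSpace ℝ (Fin m) → EuclideanSpace ℝ (Fin m))
    (hhomog : ∀ (c : ℝ) (x : EuclideanSpace ℝ (Fin m)), h (c • x) = c • h x)
    (hquasi : ∀ (r : ℕ) (x : Fin r → EuclideanSpace ℝ (Fin m)),
      (∑ i, x i = 0) → ‖∑ i, h (x i)‖ ≤ ∑ i, ‖x i‖) :
    ∀ (r : ℕ) (z : Fin r → EuclideanSpace ℝ (Fin m) × EuclideanSpace ℝ (Fin m)),
      (∑ i, z i = 0) →
      Real.sqrt (‖∑ i, h (z i).1‖ ^ 2 + ‖∑ i, h (z i).2‖ ^ 2 +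
          ‖∑ i, (‖(z i).2‖ / Real.sqrt (‖(z i).1‖ ^ 2 + ‖(z i).2‖ ^ 2)) • (z i).1‖ ^ 2) ≤
        ∑ i, Real.sqrt (‖(z i).1‖ ^ 2 + ‖(z i).2‖ ^ 2) :=
  stmt_12_general h hquasi
end
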